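/- Let 0 < R < π, let c = 4 cot²(R/2) log cos(R/2), and define u : (0, R] → ℝ by u(r) = 2(log cos(r/2))² − 2(log cos(R/2))² + Li₂(−tan²(r/2)) − Li₂(−tan²(R/2)) + c·log( cos(r/2)/cos(R/2) ). Then 2π ∫₀^R u(r) sin r dr = 4π ( sin²(R/2) − 4 cot²(R/2) (log cos(R/2))² ). -/

import Mathlib

/-!
Write `u r = f r - f R` with `f r = 2 (log cos (r/2))² + Li₂(-tan²(r/2)) + c log cos (r/2)` and
integrate by parts against `1 - cos r`, a primitive of `sin r` vanishing at `0`; both boundary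
terms vanish. In the remaining `-∫ f' (1 - cos r)` the dilogarithm disappears, since
`(Li₂(-tan²(r/2)))' = 4 log cos (r/2) / sin r` and `(1 - cos r) / sin r = tan (r/2)`, and
`-f' (1 - cos r)` has the elementary primitive `2 (1 + cos r - c) log cos (r/2) + (c/2 - 1) cos r`.
-/

open MeasureTheory Real

/-- The dilogarithm, defined for real `x ≤ 1` by `Li₂(x) = −∫₀ˣ log(1−t)/t dt`. -/
noncomputable def Li2 (x : ℝ) : ℝ := - ∫ t in (0:ℝ)..x, Real.log (1 - t) / t

open Set

lemma abs_log_one_sub_div_le_one {t : ℝ} (ht : t ≤ 0) : |log (1 - t) / t| ≤ 1 := by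
  rcases ht.eq_or_lt with rfl | ht
  · simp
  have hlog_nonneg : 0 ≤ log (1 - t) := log_nonneg (by linarith)
  have hlog_le : log (1 - t) ≤ -t := by linarith [log_le_sub_one_of_pos (by linarith : 0 < 1 - t)]
  rw [abs_div, abs_of_nonneg hlog_nonneg, abs_of_neg ht]
  exact div_le_one_of_le₀ hlog_le (by linarith)

lemma measurable_log_one_sub_div : Measurable fun t : ℝ => log (1 - t) / t := by fun_prop

lemma intervalIntegrable_log_one_sub_div {a b : ℝ} (ha : a ≤ 0) (hb : b ≤ 0) :
    IntervalIntegrable (fun t => log (1 - t) / t) volume a b := by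
  refine (intervalIntegrable_const (c := (1 : ℝ))).mono_fun
    measurable_log_one_sub_div.aestronglyMeasurable.restrict ?_
  filter_upwards [ae_restrict_mem measurableSet_uIoc] with t ht
  have ht0 : t ≤ 0 := (uIoc_subset_uIcc ht).2.trans (max_le ha hb)
  simpa [← abs_div] using abs_log_one_sub_div_le_one ht0

lemma hasDerivAt_Li2 {x : ℝ} (hx : x < 0) : HasDerivAt Li2 (-(log (1 - x) / x)) x := by
  have hcont : ContinuousAt (fun t => log (1 - t) / t) x :=
    (((continuous_const.sub continuous_id).continuousAt).log (by simp; linarith)).div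
      continuousAt_id hx.ne
  exact (intervalIntegral.integral_hasDerivAt_right
    (intervalIntegrable_log_one_sub_div le_rfl hx.le)
    measurable_log_one_sub_div.stronglyMeasurable.stronglyMeasurableAtFilter
    hcont).neg

lemma continuousOn_Li2 : ContinuousOn Li2 (Iic 0) := by
  intro x hx
  rw [mem_Iic] at hx
  have hint := intervalIntegrable_log_one_sub_div (by linarith : x - 1 ≤ 0) le_rfl
  have hprim := (intervalIntegral.continuousOn_primitive_interval' hint right_mem_uIcc).neg
  rw [uIcc_of_le (by linarith)] at hprim
  refine (hprim x ⟨by linarith, hx⟩).mono_of_mem_nhdsWithin ?_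
  rw [← Ici_inter_Iic, inter_comm]
  exact inter_mem_nhdsWithin _ (Ici_mem_nhds (by linarith))

lemma sin_eq_two_mul_sin_half_mul_cos_half (r : ℝ) : sin r = 2 * sin (r/2) * cos (r/2) := by
  rw [← sin_two_mul, mul_div_cancel₀ r two_ne_zero]

lemma hasDerivAt_log_cos_half {r : ℝ} (hr : cos (r/2) ≠ 0) :
    HasDerivAt (fun s => log (cos (s/2))) (-tan (r/2) / 2) r := by
  refine (((hasDerivAt_id r).div_const 2).cos.log hr).congr_deriv ?_
  rw [tan_eq_sin_div_cos]
  field_simp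
  simp [hr]

lemma hasDerivAt_Li2_neg_tan_half_sq {r : ℝ} (hr0 : 0 < r) (hrπ : r < π) :
    HasDerivAt (fun s => Li2 (-tan (s/2)^2)) (4 * log (cos (r/2)) / sin r) r := by
  have hcos : 0 < cos (r/2) := cos_pos_of_mem_Ioo ⟨by linarith, by linarith⟩
  have htan : 0 < tan (r/2) := tan_pos_of_pos_of_lt_pi_div_two (by linarith) (by linarith)
  have hLi2 := hasDerivAt_Li2 (neg_lt_zero.mpr (pow_pos htan 2))
  refine (hLi2.comp r
    (((hasDerivAt_tan hcos.ne').comp r ((hasDerivAt_id r).div_const 2)).pow 2).neg).congr_deriv ?_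
  have hsec : 1 - -tan (r/2)^2 = (cos (r/2)^2)⁻¹ := by
    rw [← inv_one_add_tan_sq hcos.ne', inv_inv]; ring
  simp only [Function.comp_apply, id, Nat.cast_ofNat, Nat.add_one_sub_one, pow_one]
  rw [hsec, log_inv, log_pow, sin_eq_two_mul_sin_half_mul_cos_half, tan_eq_sin_div_cos]
  field_simp
  ring

lemma continuousOn_log_cos_half : ContinuousOn (fun r => log (cos (r/2))) (Ioo (-π) π) := by
  intro r hr
  have hcos : 0 < cos (r/2) := cos_pos_of_mem_Ioo ⟨by linarith [hr.1], by linarith [hr.2]⟩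
  exact (continuous_cos.comp (continuous_id.div_const 2)).continuousAt.log hcos.ne'
    |>.continuousWithinAt

lemma continuousOn_Li2_neg_tan_half_sq :
    ContinuousOn (fun r => Li2 (-tan (r/2)^2)) (Ioo (-π) π) := by
  have htan : ContinuousOn (fun r => tan (r/2)) (Ioo (-π) π) :=
    continuousOn_tan_Ioo.comp (continuous_id.div_const 2).continuousOn
      fun r hr => ⟨by linarith [hr.1], by linarith [hr.2]⟩
  exact continuousOn_Li2.comp (htan.pow 2).neg fun r _ => mem_Iic.mpr (neg_nonpos.mpr (sq_nonneg _))

noncomputable def deflectionProfile (c r : ℝ) : ℝ :=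
  2 * log (cos (r/2))^2 + Li2 (-tan (r/2)^2) + c * log (cos (r/2))

lemma continuousOn_deflectionProfile (c : ℝ) :
    ContinuousOn (deflectionProfile c) (Ioo (-π) π) :=
  ((continuousOn_const.mul (continuousOn_log_cos_half.pow 2)).add
    continuousOn_Li2_neg_tan_half_sq).add (continuousOn_const.mul continuousOn_log_cos_half)

lemma hasDerivAt_deflectionProfile (c : ℝ) {r : ℝ} (hr0 : 0 < r) (hrπ : r < π) :
    HasDerivAt (deflectionProfile c)
      (-(2 * log (cos (r/2)) + c/2) * tan (r/2) + 4 * log (cos (r/2)) / sin r) r := by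
  have hcos : 0 < cos (r/2) := cos_pos_of_mem_Ioo ⟨by linarith, by linarith⟩
  have hL := hasDerivAt_log_cos_half hcos.ne'
  refine ((((hL.pow 2).const_mul 2).add (hasDerivAt_Li2_neg_tan_half_sq hr0 hrπ)).add
    (hL.const_mul c)).congr_deriv ?_
  ring

noncomputable def deflectionPrimitive (c K r : ℝ) : ℝ :=
  (deflectionProfile c r - K) * (1 - cos r) + 2 * (1 + cos r - c) * log (cos (r/2))
    + (c/2 - 1) * cos r

lemma hasDerivAt_deflectionPrimitive (c K : ℝ) {r : ℝ} (hr0 : 0 < r) (hrπ : r < π) :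
    HasDerivAt (deflectionPrimitive c K) ((deflectionProfile c r - K) * sin r) r := by
  have hcos : 0 < cos (r/2) := cos_pos_of_mem_Ioo ⟨by linarith, by linarith⟩
  have hsin : 0 < sin r := sin_pos_of_pos_of_lt_pi hr0 hrπ
  have hc := hasDerivAt_cos r
  refine (((((hasDerivAt_deflectionProfile c hr0 hrπ).sub_const K).mul (hc.const_sub 1)).add
    (((hc.const_add 1).sub_const c).const_mul 2 |>.mul
      (hasDerivAt_log_cos_half hcos.ne'))).add (hc.const_mul (c/2 - 1))).congr_deriv ?_
  have hcos_r : cos r = 2 * cos (r/2)^2 - 1 := by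
    rw [← cos_two_mul, mul_div_cancel₀ r two_ne_zero]
  have htan_sin : tan (r/2) * sin r = 1 - cos r := by
    rw [sin_eq_two_mul_sin_half_mul_cos_half, tan_eq_sin_div_cos, hcos_r]
    field_simp
    linear_combination 2 * sin_sq_add_cos_sq (r/2)
  have htan_cos : tan (r/2) * cos r = sin r - tan (r/2) := by
    rw [sin_eq_two_mul_sin_half_mul_cos_half, tan_eq_sin_div_cos, hcos_r]
    field_simp
  have hdiv : 4 * log (cos (r/2)) / sin r * (1 - cos r) = 4 * log (cos (r/2)) * tan (r/2) := by
    rw [← htan_sin]; field_simp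
  linear_combination hdiv + (2 * log (cos (r/2)) + c/2 - 1) * htan_cos

lemma integral_deflectionProfile_sub_mul_sin (c : ℝ) {R : ℝ} (hR0 : 0 < R) (hRπ : R < π) :
    ∫ r in (0:ℝ)..R, (deflectionProfile c r - deflectionProfile c R) * sin r
      = 2 * (1 + cos R - c) * log (cos (R/2)) + (c/2 - 1) * (cos R - 1) := by
  have hsub : Icc 0 R ⊆ Ioo (-π) π :=
    fun r hr => ⟨by linarith [hr.1, pi_pos], hr.2.trans_lt hRπ⟩
  have hf := (continuousOn_deflectionProfile c).mono hsub
  have hL := continuousOn_log_cos_half.mono hsub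
  have hderiv (r : ℝ) (hr : r ∈ Ioo 0 R) :=
    hasDerivAt_deflectionPrimitive c (deflectionProfile c R) hr.1 (hr.2.trans hRπ)
  have hint : IntervalIntegrable (fun r => (deflectionProfile c r - deflectionProfile c R) * sin r)
      volume 0 R :=
    ContinuousOn.intervalIntegrable (by rw [uIcc_of_le hR0.le]; fun_prop)
  rw [intervalIntegral.integral_eq_sub_of_hasDerivAt_of_le hR0.le
    (by unfold deflectionPrimitive; fun_prop) hderiv hint]
  simp only [deflectionPrimitive, sub_self, zero_mul, zero_add, cos_zero, mul_zero, zero_div,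
    log_one, add_zero, mul_one]
  ring

/-- Maximal mean deflection on a spherical cap: the integral in geodesic polar
coordinates of the clamped-plate deflection `u` over the cap of radius `R < π`
on the unit 2-sphere equals `4π(sin²(R/2) − 4cot²(R/2)(log cos(R/2))²)`. -/
theorem stmt_15 (R : ℝ) (hR0 : 0 < R) (hRπ : R < π)
    (c : ℝ) (hc : c = 4 * (Real.cos (R/2) / Real.sin (R/2))^2 * Real.log (Real.cos (R/2)))
    (u : ℝ → ℝ)
    (hu : ∀ r, u r = 2 * (Real.log (Real.cos (r/2)))^2 - 2 * (Real.log (Real.cos (R/2)))^2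
        + Li2 (-(Real.tan (r/2))^2) - Li2 (-(Real.tan (R/2))^2)
        + c * Real.log (Real.cos (r/2) / Real.cos (R/2))) :
    2 * π * ∫ r in (0:ℝ)..R, u r * Real.sin r
      = 4 * π * ((Real.sin (R/2))^2
          - 4 * (Real.cos (R/2) / Real.sin (R/2))^2 * (Real.log (Real.cos (R/2)))^2) := by
  have hcos_pos {r : ℝ} (hr : r ∈ uIcc 0 R) : 0 < cos (r/2) := by
    rw [uIcc_of_le hR0.le] at hr
    exact cos_pos_of_mem_Ioo ⟨by linarith [hr.1, pi_pos], by linarith [hr.2]⟩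
  have hsin : 0 < sin (R/2) := sin_pos_of_pos_of_lt_pi (by linarith) (by linarith)
  have hu_eq : EqOn u (fun r => deflectionProfile c r - deflectionProfile c R) (uIcc 0 R) :=
    fun r hr => by
      simp only [hu, deflectionProfile]
      rw [log_div (hcos_pos hr).ne' (hcos_pos right_mem_uIcc).ne']
      ring
  have hcos_R : cos R = cos (R/2)^2 - sin (R/2)^2 := by
    rw [← cos_two_mul', mul_div_cancel₀ R two_ne_zero]
  rw [intervalIntegral.integral_congr fun r hr => congrArg (· * sin r) (hu_eq hr),
    integral_deflectionProfile_sub_mul_sin c hR0 hRπ, hcos_R, hc, div_pow, cos_sq']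
  field_simp
  ring
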